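/- arXiv:1608.06691 — 2 statements merged into one kernel-verified Lean document; each statement's English description precedes it below -/
import Mathlib

section
/- Let f_1,…,f_n be functions of t and derivatives of x_1,…,x_n, let Σ be their signature matrix (σ_{ij} = highest order of derivative of x_j occurring in f_i, or -∞), let (c;d) be a valid offset pair, and let J be the System Jacobian J_{ij} = ∂f_i/∂x_j^{(d_j - c_i)} (zero when d_j - c_i > σ_{ij}). Suppose u = (u_1,…,u_n) is a nonzero vector of functions with Jᵀu = 0, and set I = {i : u_i ≢ 0}, θ = min_{i∈I} c_i. If every component of u depends on x_j only through derivatives of order < d_j - θ (for every j), then the function f̄ = Σ_{i∈I} u_i f_i^{(c_i - θ)} depends on x_j only through derivatives of order < d_j - θ, for every j = 1,…,n. -/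
open MvPolynomial

/-- Differential polynomials in the formal variables `t` (= `none`) and
`x_j^{(k)}` (= `some (j, k)`), with real coefficients. -/
abbrev DPoly (n : ℕ) := MvPolynomial (Option (Fin n × ℕ)) ℝ

/-- The formal variable `x_j^{(k)}`. -/
noncomputable def Xv {n : ℕ} (j : Fin n) (k : ℕ) : DPoly n := X (some (j, k))

/-- The total time derivative operator `D`, acting by the chain rule. -/
noncomputable def Dop {n : ℕ} : DPoly n → DPoly n :=
  MvPolynomial.mkDerivation ℝ fun v : Option (Fin n × ℕ) =>
    match v with
    | none => (1 : DPoly n)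
    | some (j, k) => Xv j (k + 1)

/-- `hod w j`: the highest order of a derivative of `x_j` occurring in `w`
(`⊥` = `-∞` if `x_j` does not occur). This is the signature entry `σ_{ij}`
when `w = f i`. -/
noncomputable def hod {n : ℕ} (w : DPoly n) (j : Fin n) : WithBot ℤ :=
  w.vars.sup fun v =>
    match v with
    | some (j', k) => if j' = j then ((k : ℤ) : WithBot ℤ) else ⊥
    | none => ⊥

/-- The System Jacobian: `J i j = ∂f_i/∂x_j^{(d_j - c_i)}` (which is `0`
when `d j - c i > σ_{ij}`), and `0` when `d j - c i < 0`. -/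
noncomputable def sysJac {n : ℕ} (f : Fin n → DPoly n) (c d : Fin n → ℕ) :
    Matrix (Fin n) (Fin n) (DPoly n) :=
  fun i j => if c i ≤ d j then pderiv (some (j, d j - c i)) (f i) else 0

/-!
A variable occurs in a polynomial over `ℝ` iff the partial derivative in it is nonzero, so it
suffices to show `∂f̄/∂x_j^{(k)} = 0` for `k ≥ d_j - θ`. As `u_i` does not involve `x_j^{(k)}`,
this derivative is `∑ u_i ∂f_i^{(c_i - θ)}/∂x_j^{(k)}`. The commutation rule
`∂/∂x_j^{(k+1)} ∘ D = D ∘ ∂/∂x_j^{(k+1)} + ∂/∂x_j^{(k)}` shows that `D` raises the order in `x_j`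
by at most one, so every summand vanishes for `k > d_j - θ`; for `k = d_j - θ`, Griewank's lemma
turns the summand into `u_i J_{ij}`, and the sum is `(Jᵀu)_j = 0`.
-/

lemma pderiv_ne_zero_of_mem_vars {σ R : Type*} [CommSemiring R] [NoZeroDivisors R] [CharZero R]
    {w : MvPolynomial σ R} {v : σ} (h : v ∈ w.vars) : pderiv v w ≠ 0 := by
  obtain ⟨m, hm, hv⟩ := (mem_vars_iff_mem_support v).1 h
  have hmv : Finsupp.single v 1 ≤ m := Finsupp.single_le_iff.2 (Nat.one_le_iff_ne_zero.2
    (Finsupp.mem_support_iff.1 hv))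
  intro h0
  have := coeff_pderiv (i := v) w (m - Finsupp.single v 1)
  rw [h0, tsub_add_cancel_of_le hmv, coeff_zero, eq_comm] at this
  exact mul_ne_zero (mem_support_iff.1 hm) (Nat.cast_add_one_ne_zero _) this

section

variable {n : ℕ}

noncomputable def dopDerivation (n : ℕ) : Derivation ℝ (DPoly n) (DPoly n) :=
  mkDerivation ℝ fun v : Option (Fin n × ℕ) =>
    match v with
    | none => (1 : DPoly n)
    | some (j, k) => Xv j (k + 1)

lemma coe_dopDerivation : ⇑(dopDerivation n) = Dop := rfl

lemma Dop_X_none : Dop (X none : DPoly n) = 1 := mkDerivation_X _ _ _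

lemma Dop_X_some (j : Fin n) (k : ℕ) : Dop (X (some (j, k)) : DPoly n) = X (some (j, k + 1)) :=
  mkDerivation_X _ _ _

lemma lie_pderiv_dopDerivation_X (v w : Option (Fin n × ℕ)) :
    ⁅pderiv (R := ℝ) v, dopDerivation n⁆ (X w) = pderiv v (Dop (X w)) := by
  rw [Derivation.commutator_apply, coe_dopDerivation, pderiv_X, Pi.single_apply]
  split_ifs <;> simp [Dop]

lemma lie_pderiv_succ_dopDerivation (j : Fin n) (k : ℕ) :
    ⁅pderiv (R := ℝ) (some (j, k + 1)), dopDerivation n⁆ = pderiv (some (j, k)) := by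
  refine derivation_ext fun w => ?_
  rw [lie_pderiv_dopDerivation_X]
  rcases w with _ | ⟨j', k'⟩
  · simp [Dop_X_none]
  · simp [Dop_X_some, pderiv_X, Pi.single_apply]

lemma lie_pderiv_zero_dopDerivation (j : Fin n) :
    ⁅pderiv (R := ℝ) (some (j, 0)), dopDerivation n⁆ = 0 := by
  refine derivation_ext fun w => ?_
  rw [lie_pderiv_dopDerivation_X]
  rcases w with _ | ⟨j', k'⟩
  · simp [Dop_X_none]
  · simp [Dop_X_some, pderiv_X]

lemma pderiv_succ_Dop (j : Fin n) (k : ℕ) (w : DPoly n) :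
    pderiv (some (j, k + 1)) (Dop w) =
      Dop (pderiv (some (j, k + 1)) w) + pderiv (some (j, k)) w := by
  rw [← lie_pderiv_succ_dopDerivation j k, Derivation.commutator_apply, coe_dopDerivation,
    add_sub_cancel]

lemma pderiv_zero_Dop (j : Fin n) (w : DPoly n) :
    pderiv (some (j, 0)) (Dop w) = Dop (pderiv (some (j, 0)) w) := by
  rw [← sub_eq_zero, ← coe_dopDerivation, ← Derivation.commutator_apply,
    lie_pderiv_zero_dopDerivation, Derivation.zero_apply]

lemma le_hod_of_mem_vars {w : DPoly n} {j : Fin n} {k : ℕ} (h : some (j, k) ∈ w.vars) :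
    ((k : ℤ) : WithBot ℤ) ≤ hod w j := by
  refine le_trans ?_ (Finset.le_sup h)
  simp

lemma hod_lt_iff {w : DPoly n} {j : Fin n} {z : ℤ} :
    hod w j < (z : WithBot ℤ) ↔ ∀ k : ℕ, z ≤ k → pderiv (some (j, k)) w = 0 := by
  refine ⟨fun h k hk => pderiv_eq_zero_of_notMem_vars fun hm => ?_, fun h => ?_⟩
  · have := WithBot.coe_lt_coe.1 ((le_hod_of_mem_vars hm).trans_lt h)
    omega
  · refine (Finset.sup_lt_iff (WithBot.bot_lt_coe z)).2 fun v hv => ?_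
    rcases v with _ | ⟨j', k⟩
    · exact WithBot.bot_lt_coe z
    · dsimp only
      split_ifs with hj
      · subst hj
        by_contra! hk
        exact pderiv_ne_zero_of_mem_vars hv (h k (WithBot.coe_le_coe.1 hk))
      · exact WithBot.bot_lt_coe z

lemma hod_lt_of_le_of_neg {w : DPoly n} {j : Fin n} {z : ℤ} (h : hod w j ≤ (z : WithBot ℤ))
    (hz : z < 0) : hod w j < (z : WithBot ℤ) :=
  hod_lt_iff.2 fun k _ => pderiv_eq_zero_of_notMem_vars fun hm => by
    have := WithBot.coe_le_coe.1 ((le_hod_of_mem_vars hm).trans h)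
    omega

lemma hod_lt_add_one_of_le {w : DPoly n} {j : Fin n} {z : ℤ} (h : hod w j ≤ (z : WithBot ℤ)) :
    hod w j < ((z + 1 : ℤ) : WithBot ℤ) :=
  h.trans_lt (WithBot.coe_lt_coe.2 (lt_add_one z))

lemma hod_Dop_lt {w : DPoly n} {j : Fin n} {z : ℤ} (h : hod w j < (z : WithBot ℤ)) :
    hod (Dop w) j < ((z + 1 : ℤ) : WithBot ℤ) := by
  rw [hod_lt_iff] at h ⊢
  rintro (_ | k) hk
  · rw [pderiv_zero_Dop, h 0 (by omega), Dop, map_zero]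
  · rw [pderiv_succ_Dop, h (k + 1) (by omega), h k (by omega), Dop, map_zero, zero_add]

lemma hod_iterate_Dop_lt {w : DPoly n} {j : Fin n} {z : ℤ} (h : hod w j < (z : WithBot ℤ))
    (p : ℕ) : hod (Dop^[p] w) j < ((z + p : ℤ) : WithBot ℤ) := by
  induction p with
  | zero => simpa using h
  | succ p ih =>
    rw [Function.iterate_succ_apply', Nat.cast_succ, ← add_assoc]
    exact hod_Dop_lt ih

/-- Griewank's lemma. -/
lemma pderiv_iterate_Dop_of_hod_le {w : DPoly n} {j : Fin n} {m : ℕ}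
    (h : hod w j ≤ ((m : ℤ) : WithBot ℤ)) (p : ℕ) :
    pderiv (some (j, m + p)) (Dop^[p] w) = pderiv (some (j, m)) w := by
  induction p with
  | zero => rfl
  | succ p ih =>
    rw [Function.iterate_succ_apply', ← add_assoc, pderiv_succ_Dop, ih,
      hod_lt_iff.1 (hod_iterate_Dop_lt (hod_lt_add_one_of_le h) p) _ (by push_cast; omega), Dop,
      map_zero, zero_add]

lemma pderiv_iterate_Dop_eq_sysJac {f : Fin n → DPoly n} {c d : Fin n → ℕ} {i j : Fin n}
    {θ : ℕ}
    (hf : hod (f i) j ≤ (((d j : ℤ) - (c i : ℤ) : ℤ) : WithBot ℤ)) (hθc : θ ≤ c i)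
    (hθd : θ ≤ d j) :
    pderiv (some (j, d j - θ)) (Dop^[c i - θ] (f i)) = sysJac f c d i j := by
  unfold sysJac
  split_ifs with hcd
  · rw [show d j - θ = d j - c i + (c i - θ) by omega, pderiv_iterate_Dop_of_hod_le (by
      rwa [Nat.cast_sub hcd])]
  · refine hod_lt_iff.1 (hod_iterate_Dop_lt (hod_lt_of_le_of_neg hf (by omega)) _) _ ?_
    push_cast [hθc, hθd]
    omega

end

theorem stmt5_general {n : ℕ} (f u : Fin n → DPoly n) (c d : Fin n → ℕ)
    (hle : ∀ i j, hod (f i) j ≤ (((d j : ℤ) - (c i : ℤ) : ℤ) : WithBot ℤ))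
    (hker : ∀ j, ∑ i, u i * sysJac f c d i j = 0)
    (θ : ℕ)
    (hθ1 : ∀ i, u i ≠ 0 → θ ≤ c i)
    (hu : ∀ i j, hod (u i) j < (((d j : ℤ) - (θ : ℤ) : ℤ) : WithBot ℤ)) :
    ∀ j, hod (∑ i, u i * Dop^[c i - θ] (f i)) j
      < (((d j : ℤ) - (θ : ℤ) : ℤ) : WithBot ℤ) := by
  intro j
  refine hod_lt_iff.2 fun k hk => ?_
  have hterm : ∀ i, pderiv (some (j, k)) (u i * Dop^[c i - θ] (f i))
      = u i * pderiv (some (j, k)) (Dop^[c i - θ] (f i)) := fun i => by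
    rw [pderiv_mul, hod_lt_iff.1 (hu i j) k hk, zero_mul, zero_add]
  simp only [map_sum, hterm]
  rcases hk.eq_or_lt with hk | hk
  · obtain rfl : k = d j - θ := by omega
    rw [← hker j]
    refine Finset.sum_congr rfl fun i _ => ?_
    by_cases hui : u i = 0
    · simp [hui]
    · rw [pderiv_iterate_Dop_eq_sysJac (hle i j) (hθ1 i hui) (by omega)]
  · refine Finset.sum_eq_zero fun i _ => ?_
    by_cases hui : u i = 0
    · simp [hui]
    · have hf := hod_iterate_Dop_lt (hod_lt_add_one_of_le (hle i j)) (c i - θ)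
      rw [hod_lt_iff.1 hf k (by push_cast [hθ1 i hui]; omega), mul_zero]

/-- **LC lemma.** Let `(c; d)` be a valid offset pair for the DAE `f = 0`
(signature entries `hod (f i) j`, with equality on a transversal `T`), let
`u ≠ 0` satisfy `Jᵀu = 0`, and let `θ = min {c i : u i ≢ 0}`. If every
component of `u` depends on `x_j` only through derivatives of order
`< d j - θ` (for every `j`), then `f̄ = ∑_{u i ≠ 0} u i · f i^{(c i - θ)}`
depends on `x_j` only through derivatives of order `< d j - θ`, for all `j`. -/
theorem stmt5 {n : ℕ} (f u : Fin n → DPoly n) (c d : Fin n → ℕ)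
    (hle : ∀ i j, hod (f i) j ≤ (((d j : ℤ) - (c i : ℤ) : ℤ) : WithBot ℤ))
    (T : Equiv.Perm (Fin n))
    (hT : ∀ i, hod (f i) (T i) = (((d (T i) : ℤ) - (c i : ℤ) : ℤ) : WithBot ℤ))
    (hu0 : u ≠ 0)
    (hker : ∀ j, ∑ i, u i * sysJac f c d i j = 0)
    (θ : ℕ)
    (hθ1 : ∀ i, u i ≠ 0 → θ ≤ c i)
    (hθ2 : ∃ i, u i ≠ 0 ∧ c i = θ)
    (hu : ∀ i j, hod (u i) j < (((d j : ℤ) - (θ : ℤ) : ℤ) : WithBot ℤ)) :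
    ∀ j, hod (∑ i, u i * Dop^[c i - θ] (f i)) j
      < (((d j : ℤ) - (θ : ℤ) : ℤ) : WithBot ℤ) :=
  stmt5_general f u c d hle hker θ hθ1 hu
end

section
/- If the formal signature matrix Σ̃ (computed without symbolic cancellation) of a DAE satisfies val(Σ̃) > val(Σ), where Σ is the true signature matrix, then for any valid offset pair (c̃;d̃) of Σ̃ the formal System Jacobian J̃ defined by J̃_{ij} = ∂f_i/∂x_j^{(d̃_j - c̃_i)} if d̃_j - c̃_i = σ̃_{ij} and 0 otherwise, is structurally singular: every transversal of J̃ contains an identically zero entry. -/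
/-!
If some transversal `p` of `Jt` had no zero entry, then along `p` the formal signature would be
tight for the offsets (`St i (p i) = dt (p i) - ct i`) and would agree with the true one
(`S i (p i) = St i (p i)`). A matrix dominated by the offsets has all transversal sums at most
`∑ dt - ∑ ct`, with equality on tight transversals; hence
`val(St) ≤ ∑ dt - ∑ ct = tval S p ≤ val(S)`, contradicting `val(S) < val(St)`.
-/

/-- Transversal value of a signature matrix (entries in `ℤ ∪ {-∞}` = `WithBot ℤ`). -/
def tval {n : ℕ} (A : Matrix (Fin n) (Fin n) (WithBot ℤ)) (p : Equiv.Perm (Fin n)) : WithBot ℤ :=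
  ∑ i, A i (p i)

/-- The value `val(Σ)`: the maximum transversal sum. -/
noncomputable def sigVal {n : ℕ} (A : Matrix (Fin n) (Fin n) (WithBot ℤ)) : WithBot ℤ :=
  Finset.univ.sup fun p : Equiv.Perm (Fin n) => tval A p

open Finset

variable {n : ℕ}

lemma sum_coe_offsets (c d : Fin n → ℤ) (q : Equiv.Perm (Fin n)) :
    ∑ i, ((d (q i) - c i : ℤ) : WithBot ℤ) = ((∑ i, d i - ∑ i, c i : ℤ) : WithBot ℤ) := by
  rw [← WithBot.coe_sum, sum_sub_distrib, Equiv.sum_comp q d]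

lemma tval_le_of_le_offsets {A : Matrix (Fin n) (Fin n) (WithBot ℤ)} {c d : Fin n → ℤ}
    (hle : ∀ i j, A i j ≤ ((d j - c i : ℤ) : WithBot ℤ)) (q : Equiv.Perm (Fin n)) :
    tval A q ≤ ((∑ i, d i - ∑ i, c i : ℤ) : WithBot ℤ) :=
  (sum_le_sum fun i _ => hle i (q i)).trans_eq (sum_coe_offsets c d q)

lemma sigVal_le_of_le_offsets {A : Matrix (Fin n) (Fin n) (WithBot ℤ)} {c d : Fin n → ℤ}
    (hle : ∀ i j, A i j ≤ ((d j - c i : ℤ) : WithBot ℤ)) :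
    sigVal A ≤ ((∑ i, d i - ∑ i, c i : ℤ) : WithBot ℤ) :=
  Finset.sup_le fun q _ => tval_le_of_le_offsets hle q

lemma tval_eq_of_tight {A : Matrix (Fin n) (Fin n) (WithBot ℤ)} {c d : Fin n → ℤ}
    {p : Equiv.Perm (Fin n)} (htight : ∀ i, A i (p i) = ((d (p i) - c i : ℤ) : WithBot ℤ)) :
    tval A p = ((∑ i, d i - ∑ i, c i : ℤ) : WithBot ℤ) :=
  (sum_congr rfl fun i _ => htight i).trans (sum_coe_offsets c d p)

lemma tval_le_sigVal (A : Matrix (Fin n) (Fin n) (WithBot ℤ)) (p : Equiv.Perm (Fin n)) :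
    tval A p ≤ sigVal A :=
  Finset.le_sup (f := tval A) (mem_univ p)

theorem stmt17_general {n : ℕ} {R : Type*} [CommRing R]
    (S St : Matrix (Fin n) (Fin n) (WithBot ℤ))
    (hge : ∀ i j, S i j ≤ St i j)
    (ct dt : Fin n → ℤ)
    (hle : ∀ i j, St i j ≤ ((dt j - ct i : ℤ) : WithBot ℤ))
    (Jt : Matrix (Fin n) (Fin n) R)
    (hJ1 : ∀ i j, S i j < St i j → Jt i j = 0)
    (hJ2 : ∀ i j, St i j < ((dt j - ct i : ℤ) : WithBot ℤ) → Jt i j = 0)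
    (hval : sigVal S < sigVal St) :
    ∀ p : Equiv.Perm (Fin n), ∃ i, Jt i (p i) = 0 := by
  intro p
  by_contra! hp
  have hSt_tight : ∀ i, St i (p i) = ((dt (p i) - ct i : ℤ) : WithBot ℤ) := fun i =>
    (hle i (p i)).eq_of_not_lt fun hlt => hp i (hJ2 i (p i) hlt)
  have hS_tight : ∀ i, S i (p i) = ((dt (p i) - ct i : ℤ) : WithBot ℤ) := fun i =>
    ((hge i (p i)).eq_of_not_lt fun hlt => hp i (hJ1 i (p i) hlt)).trans (hSt_tight i)
  refine hval.not_ge ?_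
  calc sigVal St ≤ ((∑ i, dt i - ∑ i, ct i : ℤ) : WithBot ℤ) := sigVal_le_of_le_offsets hle
    _ = tval S p := (tval_eq_of_tight hS_tight).symm
    _ ≤ sigVal S := tval_le_sigVal S p

/-- If the formal signature matrix `St` (entrywise ≥ the true signature matrix
`S`) has `val(St) > val(S)`, then for any valid offset pair `(ct; dt)` of `St`
the formal System Jacobian `Jt` (whose `(i,j)` entry vanishes identically when
`S i j < St i j`, by lack of true dependence, and also when `St i j < dt j - ct i`,
by definition) is structurally singular: every transversal contains a zero entry.
Entries of `Jt` live in a commutative ring `R` of "functions". -/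
theorem stmt17 {n : ℕ} {R : Type*} [CommRing R]
    (S St : Matrix (Fin n) (Fin n) (WithBot ℤ))
    (hge : ∀ i j, S i j ≤ St i j)
    (ct dt : Fin n → ℤ) (hc : ∀ i, 0 ≤ ct i)
    (hle : ∀ i j, St i j ≤ ((dt j - ct i : ℤ) : WithBot ℤ))
    (T : Equiv.Perm (Fin n))
    (hT : ∀ i, St i (T i) = ((dt (T i) - ct i : ℤ) : WithBot ℤ))
    (Jt : Matrix (Fin n) (Fin n) R)
    (hJ1 : ∀ i j, S i j < St i j → Jt i j = 0)
    (hJ2 : ∀ i j, St i j < ((dt j - ct i : ℤ) : WithBot ℤ) → Jt i j = 0)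
    (hval : sigVal S < sigVal St) :
    ∀ p : Equiv.Perm (Fin n), ∃ i, Jt i (p i) = 0 :=
  stmt17_general S St hge ct dt hle Jt hJ1 hJ2 hval
end
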